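/- arXiv:1704.01787 — 2 statements merged into one kernel-verified Lean document; each statement's English description precedes it below -/
import Mathlib

section
/- Let q(t) = t⁻⁸ − 4t⁻⁷ + 5t⁻⁶ − 7t⁻⁵ + 8t⁻⁴ − 6t⁻³ + 7t⁻² − 4t⁻¹ + 2 − t ∈ ℤ[t,t⁻¹]. Then q has breadth 9, its lowest-degree coefficient is 1 and its highest-degree coefficient is −1, and the absolute value of some intermediate coefficient exceeds 1; moreover q has breadth 9 ≠ 10, so q cannot be the Jones polynomial of a link admitting a semi-alternating diagram with 11 crossings. -/
open LaurentPolynomial Finset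

/-- minimal degree of a Laurent polynomial, as an element of `WithBot ℤ`. -/
noncomputable def lowDeg (f : LaurentPolynomial ℤ) : WithBot ℤ := (AddMonoidAlgebra.coeff f).support.min

/-- maximal degree of a Laurent polynomial, as an element of `WithTop ℤ`. -/
noncomputable def highDeg (f : LaurentPolynomial ℤ) : WithTop ℤ := (AddMonoidAlgebra.coeff f).support.max

/-- coefficient of `t^n`. -/
noncomputable def cf (f : LaurentPolynomial ℤ) (n : ℤ) : ℤ := (AddMonoidAlgebra.coeff f) n

/-- breadth = maximal degree minus minimal degree. -/
noncomputable def breadth (f : LaurentPolynomial ℤ) : ℤ :=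
  (highDeg f).untopD 0 - (lowDeg f).unbotD 0


/-- The Jones polynomial of `11n76* = M(1/2, 2/3, −2/3, 1/3)`. -/
noncomputable def q : LaurentPolynomial ℤ :=
  T (-8) - 4 * T (-7) + 5 * T (-6) - 7 * T (-5) + 8 * T (-4) - 6 * T (-3)
    + 7 * T (-2) - 4 * T (-1) + 2 - T 1

lemma q_eq : AddMonoidAlgebra.coeff q =
    (Finsupp.single (-8:ℤ) (1:ℤ)) + (Finsupp.single (-7:ℤ) (-4:ℤ))
    + (Finsupp.single (-6:ℤ) (5:ℤ)) + (Finsupp.single (-5:ℤ) (-7:ℤ))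
    + (Finsupp.single (-4:ℤ) (8:ℤ)) + (Finsupp.single (-3:ℤ) (-6:ℤ))
    + (Finsupp.single (-2:ℤ) (7:ℤ)) + (Finsupp.single (-1:ℤ) (-4:ℤ))
    + (Finsupp.single (0:ℤ) (2:ℤ)) + (Finsupp.single (1:ℤ) (-1:ℤ)) := by
  have h4 : (4 : LaurentPolynomial ℤ) = C 4 := by simp
  have h5 : (5 : LaurentPolynomial ℤ) = C 5 := by simp
  have h6 : (6 : LaurentPolynomial ℤ) = C 6 := by simp
  have h7 : (7 : LaurentPolynomial ℤ) = C 7 := by simp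
  have h8 : (8 : LaurentPolynomial ℤ) = C 8 := by simp
  have h2 : (2 : LaurentPolynomial ℤ) = AddMonoidAlgebra.single 0 2 := by
    rw [single_eq_C]; simp
  have hT : ∀ n : ℤ, (T n : LaurentPolynomial ℤ) = AddMonoidAlgebra.single n 1 := fun _ => rfl
  rw [q, h4, h5, h6, h7, h8, h2, hT (-8), hT 1,
    ← single_eq_C_mul_T, ← single_eq_C_mul_T, ← single_eq_C_mul_T, ← single_eq_C_mul_T,
    ← single_eq_C_mul_T, ← single_eq_C_mul_T, ← single_eq_C_mul_T]
  simp only [AddMonoidAlgebra.coeff_add, AddMonoidAlgebra.coeff_sub, AddMonoidAlgebra.coeff_single]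
  simp only [Finsupp.single_neg, sub_eq_add_neg]

lemma cf_q (n : ℤ) : cf q n =
    (if (-8:ℤ) = n then (1:ℤ) else 0) + (if (-7:ℤ) = n then (-4:ℤ) else 0)
    + (if (-6:ℤ) = n then (5:ℤ) else 0) + (if (-5:ℤ) = n then (-7:ℤ) else 0)
    + (if (-4:ℤ) = n then (8:ℤ) else 0) + (if (-3:ℤ) = n then (-6:ℤ) else 0)
    + (if (-2:ℤ) = n then (7:ℤ) else 0) + (if (-1:ℤ) = n then (-4:ℤ) else 0)
    + (if (0:ℤ) = n then (2:ℤ) else 0) + (if (1:ℤ) = n then (-1:ℤ) else 0) := by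
  simp only [cf, q_eq, Finsupp.add_apply, Finsupp.single_apply]

lemma q_supp : (AddMonoidAlgebra.coeff q).support =
    ({-8, -7, -6, -5, -4, -3, -2, -1, 0, 1} : Finset ℤ) := by
  apply Finset.Subset.antisymm
  · intro n hn
    have h := Finsupp.mem_support_iff.mp hn
    rw [show (AddMonoidAlgebra.coeff q n) = cf q n from rfl, cf_q] at h
    simp only [mem_insert, mem_singleton]
    by_contra hc
    push_neg at hc
    obtain ⟨a1, a2, a3, a4, a5, a6, a7, a8, a9, a10⟩ := hc
    rw [if_neg (fun h => a1 h.symm), if_neg (fun h => a2 h.symm),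
      if_neg (fun h => a3 h.symm), if_neg (fun h => a4 h.symm),
      if_neg (fun h => a5 h.symm), if_neg (fun h => a6 h.symm),
      if_neg (fun h => a7 h.symm), if_neg (fun h => a8 h.symm),
      if_neg (fun h => a9 h.symm), if_neg (fun h => a10 h.symm)] at h
    simp at h
  · intro n hn
    simp only [mem_insert, mem_singleton] at hn
    rw [Finsupp.mem_support_iff, show (AddMonoidAlgebra.coeff q n) = cf q n from rfl]
    rcases hn with h|h|h|h|h|h|h|h|h|h <;> subst h <;> rw [cf_q] <;> norm_num

/-- `q` has breadth 9, lowest coefficient `1` (in degree `−8`),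
highest coefficient `−1` (in degree `1`), some intermediate coefficient of
absolute value `> 1`, and breadth `9 ≠ 10`, so `q` cannot be the Jones
polynomial of a link admitting a semi-alternating diagram with 11 crossings. -/
theorem stmt8 :
    lowDeg q = ((-8 : ℤ) : WithBot ℤ) ∧ cf q (-8) = 1 ∧
    highDeg q = ((1 : ℤ) : WithTop ℤ) ∧ cf q 1 = -1 ∧
    breadth q = 9 ∧
    (∃ i : ℤ, -8 < i ∧ i < 1 ∧ 1 < |cf q i|) ∧
    breadth q ≠ 10 := by
  have hlow : lowDeg q = ((-8 : ℤ) : WithBot ℤ) := by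
    rw [lowDeg, q_supp]; rfl
  have hhigh : highDeg q = ((1 : ℤ) : WithTop ℤ) := by
    rw [highDeg, q_supp]; rfl
  have hbr : breadth q = 9 := by
    rw [breadth, hlow, hhigh]; rfl
  refine ⟨hlow, by rw [cf_q]; norm_num, hhigh, by rw [cf_q]; norm_num, hbr,
    ⟨-4, by norm_num, by norm_num, by rw [cf_q]; norm_num⟩, by rw [hbr]; norm_num⟩
end

section
/- Let R = ℤ[s,s⁻¹] and fix n ≥ 2. Suppose V₁, ..., V_{n-1}, D₁ ∈ R are nonzero with: lowest term of V_i equal to s^{-6i-16} and highest term equal to −s^{-2i+2} for each 1 ≤ i ≤ n−1 (degrees doubled from the paper's t-exponents via s = t^{1/2}); lowest term of D₁ equal to s^{-19} and highest term s^{1}. Define V_n = s^{-4}·V_{n-1} + (s^{-3} − s^{-1})²·∑_{i=1}^{n-1} s^{-4n+4i+4}·V_i + (s^{-3} − s^{-1})·s^{-4n+4}·D₁. Then V_n has lowest term s^{-6n-16} and highest term −s^{-2n+2}. -/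
open LaurentPolynomial Finset

/- ### auxiliary lemmas -/

lemma cf_add (f g : LaurentPolynomial ℤ) (k : ℤ) : cf (f + g) k = cf f k + cf g k := rfl

lemma cf_sub (f g : LaurentPolynomial ℤ) (k : ℤ) : cf (f - g) k = cf f k - cf g k := rfl

noncomputable def cfHom (k : ℤ) : LaurentPolynomial ℤ →+ ℤ :=
  { toFun := fun f => cf f k, map_zero' := rfl, map_add' := fun _ _ => rfl }

lemma cf_sum (s : Finset ℕ) (F : ℕ → LaurentPolynomial ℤ) (k : ℤ) :
    cf (∑ i ∈ s, F i) k = ∑ i ∈ s, cf (F i) k := map_sum (cfHom k) F s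

lemma cf_T_mul (m : ℤ) (f : LaurentPolynomial ℤ) (k : ℤ) :
    cf (T m * f) k = cf f (k - m) := by
  have h := AddMonoidAlgebra.coeff_single_mul_apply f (1 : ℤ) m k
  rw [one_mul, neg_add_eq_sub] at h
  exact h

lemma cf_eq_zero_of_lt_lowDeg {f : LaurentPolynomial ℤ} {a : ℤ}
    (h : lowDeg f = (a : WithBot ℤ)) {k : ℤ} (hk : k < a) : cf f k = 0 := by
  by_contra hc
  have hmem : k ∈ (AddMonoidAlgebra.coeff f).support := Finsupp.mem_support_iff.mpr hc
  have h2 : (AddMonoidAlgebra.coeff f).support.min ≤ (k : WithTop ℤ) := Finset.min_le hmem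
  have h' : (AddMonoidAlgebra.coeff f).support.min = (a : WithTop ℤ) := h
  rw [h'] at h2
  exact absurd (WithTop.coe_le_coe.mp h2) (not_le.mpr hk)

lemma cf_eq_zero_of_gt_highDeg {f : LaurentPolynomial ℤ} {a : ℤ}
    (h : highDeg f = (a : WithTop ℤ)) {k : ℤ} (hk : a < k) : cf f k = 0 := by
  by_contra hc
  have hmem : k ∈ (AddMonoidAlgebra.coeff f).support := Finsupp.mem_support_iff.mpr hc
  have h2 : (k : WithBot ℤ) ≤ (AddMonoidAlgebra.coeff f).support.max := Finset.le_max hmem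
  have h' : (AddMonoidAlgebra.coeff f).support.max = (a : WithBot ℤ) := h
  rw [h'] at h2
  exact absurd (WithBot.coe_le_coe.mp h2) (not_le.mpr hk)

lemma lowDeg_eq {f : LaurentPolynomial ℤ} {a : ℤ} (h1 : cf f a ≠ 0)
    (h2 : ∀ k : ℤ, k < a → cf f k = 0) : lowDeg f = (a : WithBot ℤ) := by
  have : (AddMonoidAlgebra.coeff f).support.min = (a : WithTop ℤ) := by
    apply le_antisymm
    · exact Finset.min_le (Finsupp.mem_support_iff.mpr h1)
    · apply Finset.le_min
      intro b hb
      apply WithTop.coe_le_coe.mpr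
      by_contra hba
      push_neg at hba
      exact Finsupp.mem_support_iff.mp hb (h2 b hba)
  exact this

lemma highDeg_eq {f : LaurentPolynomial ℤ} {a : ℤ} (h1 : cf f a ≠ 0)
    (h2 : ∀ k : ℤ, a < k → cf f k = 0) : highDeg f = (a : WithTop ℤ) := by
  have : (AddMonoidAlgebra.coeff f).support.max = (a : WithBot ℤ) := by
    apply le_antisymm
    · apply Finset.max_le
      intro b hb
      apply WithBot.coe_le_coe.mpr
      by_contra hba
      push_neg at hba
      exact Finsupp.mem_support_iff.mp hb (h2 b hba)
    · exact Finset.le_max (Finsupp.mem_support_iff.mpr h1)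
  exact this

lemma expand_sq (c : ℤ) (f : LaurentPolynomial ℤ) :
    (T (-3) - T (-1) : LaurentPolynomial ℤ) ^ 2 * (T c * f)
      = T (c - 6) * f - T (c - 4) * f - T (c - 4) * f + T (c - 2) * f := by
  have e6 : (T (c - 6) : LaurentPolynomial ℤ) = T (-3) * (T (-3) * T c) := by
    rw [← T_add, ← T_add]; congr 1; ring
  have e4 : (T (c - 4) : LaurentPolynomial ℤ) = T (-3) * (T (-1) * T c) := by
    rw [← T_add, ← T_add]; congr 1; ring
  have e2 : (T (c - 2) : LaurentPolynomial ℤ) = T (-1) * (T (-1) * T c) := by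
    rw [← T_add, ← T_add]; congr 1; ring
  rw [e6, e4, e2]; ring

lemma expand_lin (c : ℤ) (f : LaurentPolynomial ℤ) :
    (T (-3) - T (-1) : LaurentPolynomial ℤ) * T c * f = T (c - 3) * f - T (c - 1) * f := by
  have e3 : (T (c - 3) : LaurentPolynomial ℤ) = T (-3) * T c := by
    rw [← T_add]; congr 1; ring
  have e1 : (T (c - 1) : LaurentPolynomial ℤ) = T (-1) * T c := by
    rw [← T_add]; congr 1; ring
  rw [e3, e1]; ring

/-- full induction step of Lemma 3.14 with `s = t^{1/2}`
(all exponents doubled).  Given `V i = [s^{-6i-16}, −s^{-2i+2}]` for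
`1 ≤ i ≤ n−1` and `D₁ = [s^{-19}, s¹]`, the combination
`V_n = s⁻⁴·V_{n−1} + (s⁻³ − s⁻¹)²·∑ s^{-4n+4i+4}·V_i + (s⁻³ − s⁻¹)·s^{-4n+4}·D₁`
has lowest term `s^{-6n-16}` and highest term `−s^{-2n+2}`. -/
theorem stmt12 (n : ℕ) (hn : 2 ≤ n) (V : ℕ → LaurentPolynomial ℤ) (D₁ : LaurentPolynomial ℤ)
    (hV : ∀ i : ℕ, 1 ≤ i → i ≤ n - 1 →
      V i ≠ 0 ∧
      lowDeg (V i) = ((-6 * (i : ℤ) - 16 : ℤ) : WithBot ℤ) ∧ cf (V i) (-6 * (i : ℤ) - 16) = 1 ∧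
      highDeg (V i) = ((-2 * (i : ℤ) + 2 : ℤ) : WithTop ℤ) ∧ cf (V i) (-2 * (i : ℤ) + 2) = -1)
    (hD1low : lowDeg D₁ = ((-19 : ℤ) : WithBot ℤ)) (hD1lowc : cf D₁ (-19) = 1)
    (hD1high : highDeg D₁ = ((1 : ℤ) : WithTop ℤ)) (hD1highc : cf D₁ 1 = 1) :
    lowDeg (T (-4) * V (n - 1)
        + (T (-3) - T (-1)) ^ 2 *
            ∑ i ∈ Finset.Icc 1 (n - 1), T (-4 * (n : ℤ) + 4 * (i : ℤ) + 4) * V i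
        + (T (-3) - T (-1)) * T (-4 * (n : ℤ) + 4) * D₁)
      = ((-6 * (n : ℤ) - 16 : ℤ) : WithBot ℤ) ∧
    cf (T (-4) * V (n - 1)
        + (T (-3) - T (-1)) ^ 2 *
            ∑ i ∈ Finset.Icc 1 (n - 1), T (-4 * (n : ℤ) + 4 * (i : ℤ) + 4) * V i
        + (T (-3) - T (-1)) * T (-4 * (n : ℤ) + 4) * D₁) (-6 * (n : ℤ) - 16) = 1 ∧
    highDeg (T (-4) * V (n - 1)
        + (T (-3) - T (-1)) ^ 2 *
            ∑ i ∈ Finset.Icc 1 (n - 1), T (-4 * (n : ℤ) + 4 * (i : ℤ) + 4) * V i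
        + (T (-3) - T (-1)) * T (-4 * (n : ℤ) + 4) * D₁)
      = ((-2 * (n : ℤ) + 2 : ℤ) : WithTop ℤ) ∧
    cf (T (-4) * V (n - 1)
        + (T (-3) - T (-1)) ^ 2 *
            ∑ i ∈ Finset.Icc 1 (n - 1), T (-4 * (n : ℤ) + 4 * (i : ℤ) + 4) * V i
        + (T (-3) - T (-1)) * T (-4 * (n : ℤ) + 4) * D₁) (-2 * (n : ℤ) + 2) = -1 := by
  have hn1 : (1 : ℕ) ≤ n - 1 := by omega
  have hVz : ∀ i : ℕ, 1 ≤ i → i ≤ n - 1 → ∀ k : ℤ,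
      (k < -6 * (i : ℤ) - 16 ∨ -2 * (i : ℤ) + 2 < k) → cf (V i) k = 0 := by
    intro i h1 h2 k hk
    rcases hk with hk | hk
    · exact cf_eq_zero_of_lt_lowDeg (hV i h1 h2).2.1 hk
    · exact cf_eq_zero_of_gt_highDeg (hV i h1 h2).2.2.2.1 hk
  have hDz : ∀ k : ℤ, (k < -19 ∨ 1 < k) → cf D₁ k = 0 := by
    intro k hk
    rcases hk with hk | hk
    · exact cf_eq_zero_of_lt_lowDeg hD1low hk
    · exact cf_eq_zero_of_gt_highDeg hD1high hk
  -- the general coefficient formula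
  have key : ∀ k : ℤ,
      cf (T (-4) * V (n - 1)
        + (T (-3) - T (-1)) ^ 2 *
            ∑ i ∈ Finset.Icc 1 (n - 1), T (-4 * (n : ℤ) + 4 * (i : ℤ) + 4) * V i
        + (T (-3) - T (-1)) * T (-4 * (n : ℤ) + 4) * D₁) k
      = cf (V (n - 1)) (k - (-4))
        + (∑ i ∈ Finset.Icc 1 (n - 1),
            (cf (V i) (k - (-4 * (n : ℤ) + 4 * (i : ℤ) + 4 - 6))
              - cf (V i) (k - (-4 * (n : ℤ) + 4 * (i : ℤ) + 4 - 4))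
              - cf (V i) (k - (-4 * (n : ℤ) + 4 * (i : ℤ) + 4 - 4))
              + cf (V i) (k - (-4 * (n : ℤ) + 4 * (i : ℤ) + 4 - 2))))
        + (cf D₁ (k - (-4 * (n : ℤ) + 4 - 3)) - cf D₁ (k - (-4 * (n : ℤ) + 4 - 1))) := by
    intro k
    rw [Finset.mul_sum]
    simp only [expand_sq, expand_lin, cf_add, cf_sub, cf_sum, cf_T_mul]
  have hcastlow : -6 * ((n - 1 : ℕ) : ℤ) - 16 = -6 * (n : ℤ) - 10 := by omega
  have hcasthigh : -2 * ((n - 1 : ℕ) : ℤ) + 2 = -2 * (n : ℤ) + 4 := by omega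
  -- coefficient at the bottom degree
  have hclow : cf (T (-4) * V (n - 1)
        + (T (-3) - T (-1)) ^ 2 *
            ∑ i ∈ Finset.Icc 1 (n - 1), T (-4 * (n : ℤ) + 4 * (i : ℤ) + 4) * V i
        + (T (-3) - T (-1)) * T (-4 * (n : ℤ) + 4) * D₁) (-6 * (n : ℤ) - 16) = 1 := by
    rw [key]
    rw [Finset.sum_eq_single (n - 1)]
    · rw [hVz (n - 1) hn1 le_rfl _ (Or.inl (by omega))]
      rw [show (-6 * (n : ℤ) - 16 - (-4 * (n : ℤ) + 4 * ((n - 1 : ℕ) : ℤ) + 4 - 6))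
            = -6 * ((n - 1 : ℕ) : ℤ) - 16 from by omega]
      rw [(hV (n - 1) hn1 le_rfl).2.2.1]
      rw [hVz (n - 1) hn1 le_rfl _ (Or.inl (by omega)),
        hVz (n - 1) hn1 le_rfl _ (Or.inl (by omega))]
      rw [hDz _ (Or.inl (by omega)), hDz _ (Or.inl (by omega))]
      ring
    · intro b hb hbne
      rw [Finset.mem_Icc] at hb
      have hb2 : (b : ℤ) < (n : ℤ) - 1 := by omega
      rw [hVz b hb.1 hb.2 _ (Or.inl (by omega)), hVz b hb.1 hb.2 _ (Or.inl (by omega)),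
        hVz b hb.1 hb.2 _ (Or.inl (by omega))]
      ring
    · intro h
      exact absurd (Finset.mem_Icc.mpr ⟨hn1, le_rfl⟩) h
  -- coefficient at the top degree
  have hchigh : cf (T (-4) * V (n - 1)
        + (T (-3) - T (-1)) ^ 2 *
            ∑ i ∈ Finset.Icc 1 (n - 1), T (-4 * (n : ℤ) + 4 * (i : ℤ) + 4) * V i
        + (T (-3) - T (-1)) * T (-4 * (n : ℤ) + 4) * D₁) (-2 * (n : ℤ) + 2) = -1 := by
    rw [key]
    rw [Finset.sum_eq_single (n - 1)]
    · rw [hVz (n - 1) hn1 le_rfl _ (Or.inr (by omega))]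
      rw [show (-2 * (n : ℤ) + 2 - (-4 * (n : ℤ) + 4 * ((n - 1 : ℕ) : ℤ) + 4 - 2))
            = -2 * ((n - 1 : ℕ) : ℤ) + 2 from by omega]
      rw [(hV (n - 1) hn1 le_rfl).2.2.2.2]
      rw [hVz (n - 1) hn1 le_rfl _ (Or.inr (by omega)),
        hVz (n - 1) hn1 le_rfl _ (Or.inr (by omega))]
      rw [hDz _ (Or.inr (by omega)), hDz _ (Or.inr (by omega))]
      ring
    · intro b hb hbne
      rw [Finset.mem_Icc] at hb
      have hb2 : (b : ℤ) < (n : ℤ) - 1 := by omega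
      rw [hVz b hb.1 hb.2 _ (Or.inr (by omega)), hVz b hb.1 hb.2 _ (Or.inr (by omega)),
        hVz b hb.1 hb.2 _ (Or.inr (by omega))]
      ring
    · intro h
      exact absurd (Finset.mem_Icc.mpr ⟨hn1, le_rfl⟩) h
  -- vanishing below the bottom degree
  have hvlow : ∀ k : ℤ, k < -6 * (n : ℤ) - 16 →
      cf (T (-4) * V (n - 1)
        + (T (-3) - T (-1)) ^ 2 *
            ∑ i ∈ Finset.Icc 1 (n - 1), T (-4 * (n : ℤ) + 4 * (i : ℤ) + 4) * V i
        + (T (-3) - T (-1)) * T (-4 * (n : ℤ) + 4) * D₁) k = 0 := by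
    intro k hk
    rw [key]
    rw [hVz (n - 1) hn1 le_rfl _ (Or.inl (by omega))]
    rw [Finset.sum_eq_zero, hDz _ (Or.inl (by omega)), hDz _ (Or.inl (by omega))]
    · ring
    · intro b hb
      rw [Finset.mem_Icc] at hb
      have hb2 : (b : ℤ) ≤ (n : ℤ) - 1 := by omega
      rw [hVz b hb.1 hb.2 _ (Or.inl (by omega)), hVz b hb.1 hb.2 _ (Or.inl (by omega)),
        hVz b hb.1 hb.2 _ (Or.inl (by omega))]
      ring
  -- vanishing above the top degree
  have hvhigh : ∀ k : ℤ, -2 * (n : ℤ) + 2 < k →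
      cf (T (-4) * V (n - 1)
        + (T (-3) - T (-1)) ^ 2 *
            ∑ i ∈ Finset.Icc 1 (n - 1), T (-4 * (n : ℤ) + 4 * (i : ℤ) + 4) * V i
        + (T (-3) - T (-1)) * T (-4 * (n : ℤ) + 4) * D₁) k = 0 := by
    intro k hk
    rw [key]
    rw [hVz (n - 1) hn1 le_rfl _ (Or.inr (by omega))]
    rw [Finset.sum_eq_zero, hDz _ (Or.inr (by omega)), hDz _ (Or.inr (by omega))]
    · ring
    · intro b hb
      rw [Finset.mem_Icc] at hb
      have hb2 : (b : ℤ) ≤ (n : ℤ) - 1 := by omega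
      rw [hVz b hb.1 hb.2 _ (Or.inr (by omega)), hVz b hb.1 hb.2 _ (Or.inr (by omega)),
        hVz b hb.1 hb.2 _ (Or.inr (by omega))]
      ring
  refine ⟨lowDeg_eq (by rw [hclow]; norm_num) hvlow, hclow,
    highDeg_eq (by rw [hchigh]; norm_num) hvhigh, hchigh⟩
end
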